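/- arXiv:1002.3807 — 4 statements merged into one kernel-verified Lean document; each statement's English description precedes it below -/
import Mathlib

section
/- For every α > 1 there exists δ_α ∈ (0,1) such that for all x₁, x₂ with 0 < x₁, x₂ < α and |x₁ - x₂| < δ < δ_α, one has |x₁·log x₁ - x₂·log x₂| < |δ·log δ|. -/
/-! Put `f x = x log x`, `0 < x ≤ y < α` and `t = y - x < δ`. Splitting
`f y - f x = x log (y / x) + t log y` gives `t log t ≤ f y - f x ≤ t (1 + log α)`:
the lower bound because `log` is monotone, the upper one from `log u ≤ u - 1`.
For `δ ≤ 1 / (e α)`, the strict decrease of `f` on `[0, 1/e]` turns the lower bound into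
`δ log δ < f y - f x`, and `log δ ≤ -(1 + log α)` turns the upper one into `f y - f x < -δ log δ`. -/

open Real

namespace Real

lemma strictAntiOn_mul_log : StrictAntiOn (fun x : ℝ ↦ x * log x) (Set.Icc 0 (exp (-1))) := by
  refine strictAntiOn_of_deriv_neg (convex_Icc _ _) continuous_mul_log.continuousOn ?_
  intro x hx
  rw [interior_Icc, Set.mem_Ioo] at hx
  have hlog : log x < -1 := by rw [← log_exp (-1)]; exact log_lt_log hx.1 hx.2
  rw [deriv_mul_log hx.1.ne']
  linarith

lemma mul_log_le_mul_log_of_le {x y : ℝ} (hx : 0 ≤ x) (hxy : x ≤ y) : x * log x ≤ x * log y := by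
  rcases hx.eq_or_lt with rfl | hx
  · simp
  · exact mul_le_mul_of_nonneg_left (log_le_log hx hxy) hx.le

lemma sub_mul_log_sub_le {x y : ℝ} (hx : 0 ≤ x) (hxy : x ≤ y) :
    (y - x) * log (y - x) ≤ y * log y - x * log x := by
  have h₁ := mul_log_le_mul_log_of_le hx hxy
  have h₂ := mul_log_le_mul_log_of_le (sub_nonneg.2 hxy) (sub_le_self y hx)
  linarith

lemma mul_log_sub_mul_log_le {x y : ℝ} (hx : 0 < x) (hy : 0 < y) :
    y * log y - x * log x ≤ (y - x) * (1 + log y) := by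
  have h : x * log (y / x) ≤ y - x := by
    calc x * log (y / x) ≤ x * (y / x - 1) :=
          mul_le_mul_of_nonneg_left (log_le_sub_one_of_pos (div_pos hy hx)) hx.le
      _ = y - x := by field_simp
  rw [log_div hy.ne' hx.ne'] at h
  linarith

lemma abs_mul_log_sub_mul_log_lt {α δ x y : ℝ} (hα : 1 ≤ α) (hδ : δ ≤ exp (-(1 + log α)))
    (hx : 0 < x) (hxy : x ≤ y) (hyα : y ≤ α) (hyx : y - x < δ) :
    |y * log y - x * log x| < -(δ * log δ) := by
  have hy : 0 < y := hx.trans_le hxy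
  have ht : 0 ≤ y - x := sub_nonneg.2 hxy
  have hδ₀ : 0 < δ := ht.trans_lt hyx
  have hlogα : 0 ≤ log α := log_nonneg hα
  have hlogδ : log δ ≤ -(1 + log α) := by rw [← log_exp (-(1 + log α))]; exact log_le_log hδ₀ hδ
  have hδe : δ ≤ exp (-1) := hδ.trans (exp_le_exp.2 (by linarith))
  rw [abs_lt]
  constructor
  · have hmono : δ * log δ < (y - x) * log (y - x) :=
      strictAntiOn_mul_log ⟨ht, (hyx.trans_le hδe).le⟩ ⟨hδ₀.le, hδe⟩ hyx
    linarith [sub_mul_log_sub_le hx.le hxy]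
  · calc y * log y - x * log x ≤ (y - x) * (1 + log y) := mul_log_sub_mul_log_le hx hy
      _ ≤ (y - x) * (1 + log α) := by gcongr
      _ < δ * (1 + log α) := by gcongr
      _ ≤ δ * -log δ := by gcongr; linarith
      _ = -(δ * log δ) := by ring

end Real

theorem key_technical_lemma :
    ∀ α : ℝ, 1 < α → ∃ δα : ℝ, 0 < δα ∧ δα < 1 ∧
      ∀ x₁ x₂ δ : ℝ, 0 < x₁ → x₁ < α → 0 < x₂ → x₂ < α →
        |x₁ - x₂| < δ → δ < δα →
        |x₁ * Real.log x₁ - x₂ * Real.log x₂| < |δ * Real.log δ| := by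
  intro α hα
  refine ⟨exp (-(1 + log α)), exp_pos _, exp_lt_one_iff.2 (by linarith [log_pos hα]), ?_⟩
  intro x₁ x₂ δ hx₁ hx₁α hx₂ hx₂α hdist hδ
  have hδ₀ : 0 < δ := (abs_nonneg _).trans_lt hdist
  have hδ₁ : δ < 1 := hδ.trans (exp_lt_one_iff.2 (by linarith [log_pos hα]))
  rw [abs_of_neg (mul_neg_of_pos_of_neg hδ₀ (log_neg hδ₀ hδ₁))]
  rcases le_total x₁ x₂ with h | h
  · rw [abs_sub_comm]
    exact abs_mul_log_sub_mul_log_lt hα.le hδ.le hx₁ h hx₂α.le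
      (by rwa [abs_sub_comm, abs_of_nonneg (sub_nonneg.2 h)] at hdist)
  · exact abs_mul_log_sub_mul_log_lt hα.le hδ.le hx₂ h hx₁α.le
      (by rwa [abs_of_nonneg (sub_nonneg.2 h)] at hdist)
end

section
/- The Shannon entropy S is near-continuous on every compact K ⊂ ℝ: for every ε > 0 there exists δ > 0 such that for any two probability density functions f, g supported on K with ess sup |f - g| < δ (and with f·log f and g·log g integrable), |S(f) - S(g)| < ε. -/
/-!
On `[0, 2]` the map `φ t = t log t` is uniformly continuous, and on `[1, ∞)` its slope
`1 + log t` is at most `t`. Hence `|φ a - φ b| ≤ η + |a - b| (a + b)` once `|a - b|` is small.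
Integrating this for `a = f x`, `b = g x` over `K`, the first term contributes `η |K|`; the
second is not small pointwise, as `f` may be unbounded, but integrates to at most
`δ (∫ f + ∫ g) = 2δ`.
-/

open MeasureTheory Real ENNReal

lemma abs_mul_log_sub_mul_log_le {a b : ℝ} (hb : 1 ≤ b) (hba : b ≤ a) :
    |a * log a - b * log b| ≤ (a - b) * a := by
  have hb0 : 0 < b := by linarith
  have ha0 : 0 < a := by linarith
  have hmono : b * log b ≤ a * log a :=
    mul_le_mul hba (log_le_log hb0 hba) (log_nonneg hb) ha0.le
  have hlog_a : log a ≤ a - 1 := log_le_sub_one_of_pos ha0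
  have hlog_ratio : b * (log a - log b) ≤ a - b := by
    rw [← log_div ha0.ne' hb0.ne']
    calc b * log (a / b) ≤ b * (a / b - 1) :=
          mul_le_mul_of_nonneg_left (log_le_sub_one_of_pos (div_pos ha0 hb0)) hb0.le
      _ = a - b := by field_simp
  rw [abs_of_nonneg (by linarith)]
  nlinarith

lemma exists_abs_mul_log_sub_mul_log_le {η : ℝ} (hη : 0 < η) :
    ∃ δ > 0, ∀ a b : ℝ, 0 ≤ a → 0 ≤ b → |a - b| ≤ δ →
      |a * log a - b * log b| ≤ η + |a - b| * (a + b) := by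
  obtain ⟨δ₀, hδ₀, hclose⟩ := Metric.uniformContinuousOn_iff.1
    ((isCompact_Icc (a := (0 : ℝ)) (b := 2)).uniformContinuousOn_of_continuous
      (f := fun t : ℝ => t * log t) continuous_mul_log.continuousOn) η hη
  refine ⟨min (δ₀ / 2) 1, by positivity, fun a b ha hb hab => ?_⟩
  wlog hba : b ≤ a generalizing a b
  · have h := this b a hb ha (by rwa [abs_sub_comm]) (le_of_not_ge hba)
    rwa [abs_sub_comm, abs_sub_comm b, add_comm b] at h
  have hδ : a - b ≤ min (δ₀ / 2) 1 := by rwa [abs_of_nonneg (by linarith)] at hab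
  have hsize : 0 ≤ |a - b| * (a + b) := by positivity
  rcases le_or_gt a 2 with ha2 | ha2
  · have h := hclose a ⟨ha, ha2⟩ b ⟨hb, by linarith⟩
      (by rw [dist_eq]; linarith [hab, min_le_left (δ₀ / 2) 1])
    rw [dist_eq] at h
    linarith
  · have hb1 : 1 ≤ b := by linarith [min_le_right (δ₀ / 2) 1]
    calc |a * log a - b * log b| ≤ (a - b) * a := abs_mul_log_sub_mul_log_le hb1 hba
      _ ≤ η + |a - b| * (a + b) := by
        rw [abs_of_nonneg (by linarith)]; nlinarith

lemma ae_abs_sub_lt_of_essSup_lt {α : Type*} [MeasurableSpace α] {μ : Measure α}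
    {f g : α → ℝ} {δ : ℝ} (h : essSup (fun x => (‖f x - g x‖₊ : ℝ≥0∞)) μ < ENNReal.ofReal δ) :
    ∀ᵐ x ∂μ, |f x - g x| < δ := by
  filter_upwards [ae_lt_of_essSup_lt h] with x hx
  simpa using hx

lemma abs_integral_comp_sub_integral_comp_le {α : Type*} [MeasurableSpace α] {μ : Measure α}
    {K : Set α} (hK : MeasurableSet K) (hKμ : μ K < ∞) {F : ℝ → ℝ} {η δ : ℝ}
    (hF : ∀ a b, 0 ≤ a → 0 ≤ b → |a - b| ≤ δ → |F a - F b| ≤ η + |a - b| * (a + b))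
    {f g : α → ℝ} (hf : ∀ x, 0 ≤ f x) (hg : ∀ x, 0 ≤ g x)
    (hfi : Integrable f μ) (hgi : Integrable g μ)
    (hfK : ∀ x, x ∉ K → f x = 0) (hgK : ∀ x, x ∉ K → g x = 0)
    (hFf : Integrable (fun x => F (f x)) μ) (hFg : Integrable (fun x => F (g x)) μ)
    (hfg : ∀ᵐ x ∂μ, |f x - g x| ≤ δ) :
    |∫ x, F (f x) ∂μ - ∫ x, F (g x) ∂μ| ≤ η * μ.real K + δ * (∫ x, f x ∂μ + ∫ x, g x ∂μ) := by
  have hind : Integrable (K.indicator fun _ => η) μ :=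
    (integrable_indicator_iff hK).2 (integrableOn_const hKμ.ne)
  have hsum : Integrable (fun x => δ * (f x + g x)) μ := (hfi.add hgi).const_mul δ
  set bound : α → ℝ := fun x => K.indicator (fun _ => η) x + δ * (f x + g x)
  have hpointwise : ∀ᵐ x ∂μ, ‖F (f x) - F (g x)‖ ≤ bound x := by
    filter_upwards [hfg] with x hx
    by_cases hxK : x ∈ K
    · calc ‖F (f x) - F (g x)‖ ≤ η + |f x - g x| * (f x + g x) := hF _ _ (hf x) (hg x) hx
        _ ≤ bound x := by
          simp only [bound, Set.indicator_of_mem hxK]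
          gcongr
          exact add_nonneg (hf x) (hg x)
    · simp [bound, hxK, hfK x hxK, hgK x hxK]
  calc |∫ x, F (f x) ∂μ - ∫ x, F (g x) ∂μ| = ‖∫ x, F (f x) - F (g x) ∂μ‖ := by
        rw [integral_sub hFf hFg, Real.norm_eq_abs]
    _ ≤ ∫ x, bound x ∂μ := norm_integral_le_of_norm_le (hind.add hsum) hpointwise
    _ = η * μ.real K + δ * (∫ x, f x ∂μ + ∫ x, g x ∂μ) := by
        simp only [bound]
        rw [integral_add hind hsum, integral_indicator_const _ hK, integral_const_mul,
          integral_add hfi hgi, smul_eq_mul, mul_comm]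

theorem entropy_near_continuous_on_compact (K : Set ℝ) (hK : IsCompact K) :
    ∀ ε : ℝ, 0 < ε → ∃ δ : ℝ, 0 < δ ∧
      ∀ f g : ℝ → ℝ,
        (∀ x, 0 ≤ f x) → (∀ x, 0 ≤ g x) →
        Integrable f → Integrable g →
        (∫ x, f x) = 1 → (∫ x, g x) = 1 →
        (∀ x, x ∉ K → f x = 0) → (∀ x, x ∉ K → g x = 0) →
        Integrable (fun x => f x * Real.log (f x)) →
        Integrable (fun x => g x * Real.log (g x)) →
        essSup (fun x => (‖f x - g x‖₊ : ℝ≥0∞)) volume < ENNReal.ofReal δ →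
        |(-∫ x, f x * Real.log (f x)) - (-∫ x, g x * Real.log (g x))| < ε := by
  intro ε hε
  set V := volume.real K
  have hV : 0 ≤ V := measureReal_nonneg
  obtain ⟨δ₁, hδ₁, hmul_log⟩ :=
    exists_abs_mul_log_sub_mul_log_le (η := ε / (2 * (V + 1))) (by positivity)
  refine ⟨min δ₁ (ε / 8), by positivity,
    fun f g hf hg hfi hgi hf1 hg1 hfK hgK hφf hφg hess => ?_⟩
  have hclose := ae_abs_sub_lt_of_essSup_lt hess
  have key := abs_integral_comp_sub_integral_comp_le (F := fun t : ℝ => t * log t)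
    hK.measurableSet hK.measure_lt_top
    (fun a b ha hb hab => hmul_log a b ha hb (hab.trans (min_le_left _ _)))
    hf hg hfi hgi hfK hgK hφf hφg (hclose.mono fun _ hx => hx.le)
  have hηV : ε / (2 * (V + 1)) * V ≤ ε / 2 := by
    rw [div_mul_eq_mul_div, div_le_div_iff₀ (by positivity) two_pos]
    nlinarith
  rw [hf1, hg1] at key
  rw [neg_sub_neg, abs_sub_comm]
  linarith [min_le_right δ₁ (ε / 8)]
end

section
/- Let p(x) = (1/x)·𝟙_B(x) where B is a countable union of disjoint intervals in (0,∞) with ∫_B (1/x) dx = 1, and let A = log(B), f(x) = μ({y > x : y ∈ A}) for x > 0 and f(x) = -μ({y < x : y ∈ A}) for x < 0. Then -∫_1^∞ p(x)·log p(x) dx = ∫_0^∞ f(x) dx and -∫_0^1 p(x)·log p(x) dx = ∫_{-∞}^0 f(x) dx, whenever the relevant integrals exist (possibly infinite). -/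
/-!
On `B` one has `-p log p = y⁻¹ log y`, and the substitution `z = log y` (with `dz = dy / y`)
turns `∫_{B ∩ (1,∞)} y⁻¹ log y dy` into `∫_{A ∩ (0,∞)} z dz`, where `A = log B`. Writing
`z = ∫_0^z dx` and exchanging the order of integration gives `∫_0^∞ μ(A ∩ (x,∞)) dx`.
The part of `B` in `(0,1)` is handled in the same way.
-/

open MeasureTheory Real ENNReal Set

theorem lintegral_measure_Ioi_eq_lintegral_measure_Iio {α : Type*} [LinearOrder α]
    [TopologicalSpace α] [OrderClosedTopology α] [SecondCountableTopology α]
    [MeasurableSpace α] [OpensMeasurableSpace α] (μ ν : Measure α) [SFinite μ] [SFinite ν] :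
    ∫⁻ x, ν (Ioi x) ∂μ = ∫⁻ y, μ (Iio y) ∂ν := by
  have hlt : MeasurableSet {q : α × α | q.1 < q.2} :=
    measurableSet_lt measurable_fst measurable_snd
  exact (Measure.prod_apply hlt).symm.trans (Measure.prod_apply_symm hlt)

theorem lintegral_Ioi_zero_volume_inter_Ioi (A : Set ℝ) :
    ∫⁻ x in Ioi 0, volume (A ∩ Ioi x) = ∫⁻ z in A, ENNReal.ofReal z := by
  simpa only [Measure.restrict_apply measurableSet_Ioi, Measure.restrict_apply measurableSet_Iio,
    inter_comm, Iio_inter_Ioi, Real.volume_Ioo, sub_zero]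
    using lintegral_measure_Ioi_eq_lintegral_measure_Iio (volume.restrict (Ioi 0))
      (volume.restrict A)

theorem lintegral_Iio_zero_volume_inter_Iio (A : Set ℝ) :
    ∫⁻ x in Iio 0, volume (A ∩ Iio x) = ∫⁻ z in A, ENNReal.ofReal (-z) := by
  simpa only [Measure.restrict_apply measurableSet_Ioi, Measure.restrict_apply measurableSet_Iio,
    inter_comm, Iio_inter_Ioi, Real.volume_Ioo, zero_sub]
    using (lintegral_measure_Ioi_eq_lintegral_measure_Iio (volume.restrict A)
      (volume.restrict (Iio 0))).symm

theorem lintegral_log_image {B : Set ℝ} (hB : MeasurableSet B) (hBpos : B ⊆ Ioi 0)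
    (g : ℝ → ℝ≥0∞) :
    ∫⁻ z in Real.log '' B, g z = ∫⁻ y in B, ENNReal.ofReal y⁻¹ * g (Real.log y) := by
  rw [lintegral_image_eq_lintegral_abs_deriv_mul hB
    (fun y hy => (hasDerivAt_log (hBpos hy).ne').hasDerivWithinAt) (log_injOn_pos.mono hBpos)]
  exact setLIntegral_congr_fun hB fun y hy => by rw [abs_of_pos (inv_pos.2 (hBpos hy))]

theorem ofReal_neg_mul_log_indicator_inv {B : Set ℝ} (hBpos : B ⊆ Ioi 0) (x : ℝ) :
    ENNReal.ofReal
        (-(B.indicator (fun y => y⁻¹) x * Real.log (B.indicator (fun y => y⁻¹) x))) =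
      B.indicator (fun y => ENNReal.ofReal y⁻¹ * ENNReal.ofReal (Real.log y)) x := by
  by_cases hx : x ∈ B
  · simp only [indicator_of_mem hx, Real.log_inv, mul_neg, neg_neg,
      ENNReal.ofReal_mul (inv_nonneg.2 (hBpos hx).le)]
  · simp [indicator_of_notMem hx]

theorem ofReal_mul_log_indicator_inv {B : Set ℝ} (hBpos : B ⊆ Ioi 0) (x : ℝ) :
    ENNReal.ofReal (B.indicator (fun y => y⁻¹) x * Real.log (B.indicator (fun y => y⁻¹) x)) =
      B.indicator (fun y => ENNReal.ofReal y⁻¹ * ENNReal.ofReal (-Real.log y)) x := by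
  by_cases hx : x ∈ B
  · simp only [indicator_of_mem hx, Real.log_inv,
      ENNReal.ofReal_mul (inv_nonneg.2 (hBpos hx).le)]
  · simp [indicator_of_notMem hx]

theorem lintegral_Ioi_one_ofReal_neg_mul_log_indicator_inv {B : Set ℝ} (hB : MeasurableSet B)
    (hBpos : B ⊆ Ioi 0) :
    ∫⁻ x in Ioi 1, ENNReal.ofReal
        (-(B.indicator (fun y => y⁻¹) x * Real.log (B.indicator (fun y => y⁻¹) x))) =
      ∫⁻ z in Real.log '' B, ENNReal.ofReal z := by
  simp only [ofReal_neg_mul_log_indicator_inv hBpos]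
  rw [lintegral_log_image hB hBpos, ← lintegral_indicator hB]
  refine setLIntegral_eq_of_support_subset fun x hx => ?_
  rw [support_indicator] at hx
  obtain ⟨hxB, hlog⟩ := hx
  have hlog_pos : 0 < Real.log x :=
    ENNReal.ofReal_pos.1 (pos_of_ne_zero (right_ne_zero_of_mul hlog))
  exact (Real.log_pos_iff (hBpos hxB).le).1 hlog_pos

theorem lintegral_Ioo_ofReal_mul_log_indicator_inv {B : Set ℝ} (hB : MeasurableSet B)
    (hBpos : B ⊆ Ioi 0) :
    ∫⁻ x in Ioo 0 1, ENNReal.ofReal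
        (B.indicator (fun y => y⁻¹) x * Real.log (B.indicator (fun y => y⁻¹) x)) =
      ∫⁻ z in Real.log '' B, ENNReal.ofReal (-z) := by
  simp only [ofReal_mul_log_indicator_inv hBpos]
  rw [lintegral_log_image hB hBpos, ← lintegral_indicator hB]
  refine setLIntegral_eq_of_support_subset fun x hx => ?_
  rw [support_indicator] at hx
  obtain ⟨hxB, hlog⟩ := hx
  have hlog_neg : Real.log x < 0 :=
    neg_pos.1 (ENNReal.ofReal_pos.1 (pos_of_ne_zero (right_ne_zero_of_mul hlog)))
  exact ⟨hBpos hxB, (Real.log_neg_iff (hBpos hxB)).1 hlog_neg⟩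

theorem entropy_integrals_eq_tail_integrals_general (B : Set ℝ) (p : ℝ → ℝ)
    (hB : MeasurableSet B) (hBsub : B ⊆ Set.Ioi (0 : ℝ))
    (hp : p = B.indicator fun x => x⁻¹) :
    (∫⁻ x in Set.Ioi (1 : ℝ), ENNReal.ofReal (-(p x * Real.log (p x))) =
        ∫⁻ x in Set.Ioi (0 : ℝ), volume ((Real.log '' B) ∩ Set.Ioi x)) ∧
    (∫⁻ x in Set.Ioo (0 : ℝ) 1, ENNReal.ofReal (p x * Real.log (p x)) =
        ∫⁻ x in Set.Iio (0 : ℝ), volume ((Real.log '' B) ∩ Set.Iio x)) := by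
  subst hp
  exact ⟨(lintegral_Ioi_one_ofReal_neg_mul_log_indicator_inv hB hBsub).trans
      (lintegral_Ioi_zero_volume_inter_Ioi _).symm,
    (lintegral_Ioo_ofReal_mul_log_indicator_inv hB hBsub).trans
      (lintegral_Iio_zero_volume_inter_Iio _).symm⟩

theorem entropy_integrals_eq_tail_integrals (B : Set ℝ) (p : ℝ → ℝ)
    (hB : MeasurableSet B) (hBsub : B ⊆ Set.Ioi (0 : ℝ))
    (hp : p = B.indicator fun x => x⁻¹)
    (hdens : (∫⁻ x in B, ENNReal.ofReal x⁻¹) = 1) :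
    (∫⁻ x in Set.Ioi (1 : ℝ), ENNReal.ofReal (-(p x * Real.log (p x))) =
        ∫⁻ x in Set.Ioi (0 : ℝ), volume ((Real.log '' B) ∩ Set.Ioi x)) ∧
    (∫⁻ x in Set.Ioo (0 : ℝ) 1, ENNReal.ofReal (p x * Real.log (p x)) =
        ∫⁻ x in Set.Iio (0 : ℝ), volume ((Real.log '' B) ∩ Set.Iio x)) :=
  entropy_integrals_eq_tail_integrals_general B p hB hBsub hp
end

section
/- For p(x) = (1/x)·𝟙_B(x) a probability density as above, with f defined from A = log B: if f is integrable on both ℝ⁻ and ℝ⁺ then the entropy S(p) = -∫ p·log p is finite and equals ∫_{-∞}^{∞} f(x) dx; if f is integrable on ℝ⁻ but not ℝ⁺ then S(p) = +∞; if integrable on ℝ⁺ but not ℝ⁻ then S(p) = -∞; if integrable on neither, S(p) does not exist. -/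
open MeasureTheory Real ENNReal

/-!
Substituting `y = log x` turns `p x dx` into `dy` on `A = log '' B` and `-p log p` into `y`, so
the positive and negative parts of `-p log p` integrate to `∫_A y⁺ dy` and `∫_A y⁻ dy`. By the
layer-cake formula these are `∫_0^∞ |A ∩ (t, ∞)| dt` and `∫_{-∞}^0 |A ∩ (-∞, t)| dt`, and the four
cases only record which of the two is finite.
-/

theorem integrable_of_lintegral_ofReal_ne_top {α : Type*} [MeasurableSpace α] {μ : Measure α}
    {f : α → ℝ} (hf : AEStronglyMeasurable f μ) (hpos : ∫⁻ a, ENNReal.ofReal (f a) ∂μ ≠ ⊤)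
    (hneg : ∫⁻ a, ENNReal.ofReal (-f a) ∂μ ≠ ⊤) : Integrable f μ := by
  refine ⟨hf, hasFiniteIntegral_iff_norm f |>.2 ?_⟩
  have hsplit : ∀ a, ENNReal.ofReal ‖f a‖ = ENNReal.ofReal (f a) + ENNReal.ofReal (-f a) := by
    intro a
    rcases le_total 0 (f a) with h | h
    · rw [norm_of_nonneg h, ENNReal.ofReal_of_nonpos (neg_nonpos.2 h), add_zero]
    · rw [norm_of_nonpos h, ENNReal.ofReal_of_nonpos h, zero_add]
  simp_rw [hsplit]
  rw [lintegral_add_left' hf.aemeasurable.ennreal_ofReal]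
  exact ENNReal.add_lt_top.2 ⟨hpos.lt_top, hneg.lt_top⟩

theorem setLIntegral_ofReal_eq_lintegral_volume_inter_Ioi (A : Set ℝ) :
    ∫⁻ y in A, ENNReal.ofReal y = ∫⁻ t in Set.Ioi 0, volume (A ∩ Set.Ioi t) := by
  have hmax : ∫⁻ y in A, ENNReal.ofReal y = ∫⁻ y in A, ENNReal.ofReal (max y 0) := by
    simp_rw [ENNReal.ofReal_max, ENNReal.ofReal_zero, max_zero]
  rw [hmax, lintegral_eq_lintegral_meas_lt _ (ae_of_all _ fun y => le_max_right y 0)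
    (by fun_prop)]
  refine setLIntegral_congr_fun measurableSet_Ioi fun t (ht : 0 < t) => ?_
  have hlevel : {y : ℝ | t < max y 0} = Set.Ioi t := by
    ext y
    simp [ht.not_gt]
  rw [hlevel, Measure.restrict_apply measurableSet_Ioi, Set.inter_comm]

theorem setLIntegral_ofReal_neg_eq_lintegral_volume_inter_Iio (A : Set ℝ) :
    ∫⁻ y in A, ENNReal.ofReal (-y) = ∫⁻ x in Set.Iio 0, volume (A ∩ Set.Iio x) := by
  have hneg := (Measure.measurePreserving_neg (volume : Measure ℝ)).setLIntegral_comp_preimage_emb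
    (Homeomorph.neg ℝ).measurableEmbedding
  have hA := hneg (fun y => ENNReal.ofReal y) (-A)
  have hIio := hneg (fun x => volume (A ∩ Set.Iio x)) (Set.Iio 0)
  simp only [Set.neg_preimage, neg_neg, Set.neg_Iio, neg_zero] at hA hIio
  rw [hA, setLIntegral_ofReal_eq_lintegral_volume_inter_Ioi, ← hIio]
  refine lintegral_congr fun t => ?_
  rw [← Measure.measure_neg, Set.inter_neg, neg_neg, Set.neg_Ioi]

theorem setLIntegral_image_log {B : Set ℝ} (hB : MeasurableSet B) (hBpos : B ⊆ Set.Ioi 0)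
    (g : ℝ → ℝ≥0∞) :
    ∫⁻ y in Real.log '' B, g y = ∫⁻ x in B, ENNReal.ofReal x⁻¹ * g (Real.log x) := by
  rw [lintegral_image_eq_lintegral_abs_deriv_mul hB
    (fun x hx => (Real.hasDerivAt_log (hBpos hx).ne').hasDerivWithinAt)
    (log_injOn_pos.mono hBpos)]
  refine setLIntegral_congr_fun hB fun x hx => ?_
  rw [abs_of_pos (inv_pos.2 (hBpos hx))]

theorem lintegral_ofReal_indicator_inv_mul_comp_log {B : Set ℝ} (hB : MeasurableSet B)
    (hBpos : B ⊆ Set.Ioi 0) (φ : ℝ → ℝ) :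
    ∫⁻ x, ENNReal.ofReal (B.indicator (fun x => x⁻¹ * φ (Real.log x)) x)
      = ∫⁻ y in Real.log '' B, ENNReal.ofReal (φ y) := by
  have hofReal : ∀ x, ENNReal.ofReal (B.indicator (fun x => x⁻¹ * φ (Real.log x)) x)
      = B.indicator (fun x => ENNReal.ofReal (x⁻¹ * φ (Real.log x))) x :=
    fun x => by by_cases hx : x ∈ B <;> simp [hx]
  simp_rw [hofReal, lintegral_indicator hB, setLIntegral_image_log hB hBpos]
  refine setLIntegral_congr_fun hB fun x hx => ?_
  exact ENNReal.ofReal_mul (inv_nonneg.2 (hBpos hx).le)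

theorem indicator_inv_mul_log_indicator_inv (B : Set ℝ) (x : ℝ) :
    B.indicator (·⁻¹) x * Real.log (B.indicator (·⁻¹) x)
      = -B.indicator (fun x => x⁻¹ * Real.log x) x := by
  by_cases hx : x ∈ B <;> simp [hx, Real.log_inv]

theorem lintegral_ofReal_neg_mul_log_indicator_inv {B : Set ℝ} (hB : MeasurableSet B)
    (hBpos : B ⊆ Set.Ioi 0) :
    ∫⁻ x, ENNReal.ofReal (-(B.indicator (·⁻¹) x * Real.log (B.indicator (·⁻¹) x)))
      = ∫⁻ y in Real.log '' B, ENNReal.ofReal y := by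
  simp_rw [indicator_inv_mul_log_indicator_inv, neg_neg]
  exact lintegral_ofReal_indicator_inv_mul_comp_log hB hBpos id

theorem lintegral_ofReal_mul_log_indicator_inv {B : Set ℝ} (hB : MeasurableSet B)
    (hBpos : B ⊆ Set.Ioi 0) :
    ∫⁻ x, ENNReal.ofReal (B.indicator (·⁻¹) x * Real.log (B.indicator (·⁻¹) x))
      = ∫⁻ y in Real.log '' B, ENNReal.ofReal (-y) := by
  simpa only [indicator_inv_mul_log_indicator_inv, mul_neg, Set.indicator_neg] using
    lintegral_ofReal_indicator_inv_mul_comp_log hB hBpos (-·)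

theorem entropy_trichotomy_general (B : Set ℝ) (p : ℝ → ℝ)
    (hB : MeasurableSet B) (hBsub : B ⊆ Set.Ioi (0 : ℝ))
    (hp : p = B.indicator fun x => x⁻¹) :
    let A := Real.log '' B
    let Fp := ∫⁻ x in Set.Ioi (0 : ℝ), volume (A ∩ Set.Ioi x)
    let Fm := ∫⁻ x in Set.Iio (0 : ℝ), volume (A ∩ Set.Iio x)
    (Fp ≠ ⊤ → Fm ≠ ⊤ →
      Integrable (fun x => p x * Real.log (p x)) ∧
      (-∫ x, p x * Real.log (p x)) = Fp.toReal - Fm.toReal) ∧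
    (Fm ≠ ⊤ → Fp = ⊤ →
      (∫⁻ x, ENNReal.ofReal (-(p x * Real.log (p x)))) = ⊤ ∧
      (∫⁻ x, ENNReal.ofReal (p x * Real.log (p x))) ≠ ⊤) ∧
    (Fp ≠ ⊤ → Fm = ⊤ →
      (∫⁻ x, ENNReal.ofReal (-(p x * Real.log (p x)))) ≠ ⊤ ∧
      (∫⁻ x, ENNReal.ofReal (p x * Real.log (p x))) = ⊤) ∧
    (Fp = ⊤ → Fm = ⊤ →
      (∫⁻ x, ENNReal.ofReal (-(p x * Real.log (p x)))) = ⊤ ∧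
      (∫⁻ x, ENNReal.ofReal (p x * Real.log (p x))) = ⊤) := by
  intro A Fp Fm
  subst hp
  have hpos : ∫⁻ x, ENNReal.ofReal (-(B.indicator (·⁻¹) x * Real.log (B.indicator (·⁻¹) x)))
      = Fp :=
    (lintegral_ofReal_neg_mul_log_indicator_inv hB hBsub).trans
      (setLIntegral_ofReal_eq_lintegral_volume_inter_Ioi A)
  have hneg : ∫⁻ x, ENNReal.ofReal (B.indicator (·⁻¹) x * Real.log (B.indicator (·⁻¹) x))
      = Fm :=
    (lintegral_ofReal_mul_log_indicator_inv hB hBsub).trans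
      (setLIntegral_ofReal_neg_eq_lintegral_volume_inter_Iio A)
  refine ⟨fun hFp hFm => ?_, fun hFm hFp => ⟨hpos.trans hFp, hneg ▸ hFm⟩,
    fun hFp hFm => ⟨hpos ▸ hFp, hneg.trans hFm⟩, fun hFp hFm => ⟨hpos.trans hFp, hneg.trans hFm⟩⟩
  have hint : Integrable fun x => B.indicator (·⁻¹) x * Real.log (B.indicator (·⁻¹) x) :=
    integrable_of_lintegral_ofReal_ne_top (by fun_prop (disch := exact hB)) (hneg ▸ hFm)
      (hpos ▸ hFp)
  refine ⟨hint, ?_⟩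
  rw [integral_eq_lintegral_pos_part_sub_lintegral_neg_part hint, hneg, hpos, neg_sub]

theorem entropy_trichotomy (B : Set ℝ) (p : ℝ → ℝ)
    (hB : MeasurableSet B) (hBsub : B ⊆ Set.Ioi (0 : ℝ))
    (hp : p = B.indicator fun x => x⁻¹)
    (hdens : (∫⁻ x in B, ENNReal.ofReal x⁻¹) = 1) :
    let A := Real.log '' B
    let Fp := ∫⁻ x in Set.Ioi (0 : ℝ), volume (A ∩ Set.Ioi x)
    let Fm := ∫⁻ x in Set.Iio (0 : ℝ), volume (A ∩ Set.Iio x)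
    (Fp ≠ ⊤ → Fm ≠ ⊤ →
      Integrable (fun x => p x * Real.log (p x)) ∧
      (-∫ x, p x * Real.log (p x)) = Fp.toReal - Fm.toReal) ∧
    (Fm ≠ ⊤ → Fp = ⊤ →
      (∫⁻ x, ENNReal.ofReal (-(p x * Real.log (p x)))) = ⊤ ∧
      (∫⁻ x, ENNReal.ofReal (p x * Real.log (p x))) ≠ ⊤) ∧
    (Fp ≠ ⊤ → Fm = ⊤ →
      (∫⁻ x, ENNReal.ofReal (-(p x * Real.log (p x)))) ≠ ⊤ ∧
      (∫⁻ x, ENNReal.ofReal (p x * Real.log (p x))) = ⊤) ∧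
    (Fp = ⊤ → Fm = ⊤ →
      (∫⁻ x, ENNReal.ofReal (-(p x * Real.log (p x)))) = ⊤ ∧
      (∫⁻ x, ENNReal.ofReal (p x * Real.log (p x))) = ⊤) :=
  entropy_trichotomy_general B p hB hBsub hp
end
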